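/- arXiv:2401.02302 — 2 statements merged into one kernel-verified Lean document; each statement's English description precedes it below -/
import Mathlib

section
/- If F is an ultrafilter on ℕ with L_n ∈ F for some n ∈ ω, then the =~-equivalence class of F is a singleton: every ultrafilter G with G =~ F (i.e. G ∣~ F and F ∣~ G) satisfies G = F. -/
/-- Upward closure under divisibility: `A↑ = {n : ∃ a ∈ A, a ∣ n}`. -/
def upcl (A : Set ℕ+) : Set ℕ+ := {n | ∃ a ∈ A, a ∣ n}

/-- `F ∣~ G` iff `A↑ ∈ G` for every `A ∈ F`. -/
def udvd (F G : Ultrafilter ℕ+) : Prop := ∀ A ∈ F, upcl A ∈ G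

/-- `L_n`: the positive integers which are products of exactly `n` primes
(counted with multiplicity). -/
def levelSet (n : ℕ) : Set ℕ+ :=
  { x | ∃ l : List ℕ+, l.length = n ∧ (∀ p ∈ l, (p : ℕ).Prime) ∧ l.prod = x }

/-!
The number of prime factors `Ω` is monotone for divisibility, so the sets `{x | k ≤ Ω x}` are
closed upward under divisibility and therefore pass along `∣~` in both directions. Hence
`L_n = {n ≤ Ω} \ {n + 1 ≤ Ω}` lies in `G` as soon as it lies in `F`. On `L_n` divisibility is
equality, so for `A ∈ G` the set `(A ∩ L_n)↑ ∩ L_n ∈ F` is contained in `A`; thus `F ≤ G`, and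
ultrafilters are maximal.
-/

open ArithmeticFunction
open scoped ArithmeticFunction.Omega

theorem PNat.coe_list_prod (l : List ℕ+) : ((l.prod : ℕ+) : ℕ) = (l.map (↑)).prod :=
  map_list_prod PNat.coeMonoidHom l

theorem cardFactors_le_of_dvd {a b : ℕ} (hb : b ≠ 0) (h : a ∣ b) : Ω a ≤ Ω b :=
  (Nat.primeFactorsList_sublist_of_dvd h hb).length_le

theorem eq_of_dvd_of_cardFactors_le {a b : ℕ} (hb : b ≠ 0) (h : a ∣ b) (hΩ : Ω b ≤ Ω a) :
    a = b := by
  obtain ⟨c, rfl⟩ := h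
  obtain ⟨ha, hc⟩ := mul_ne_zero_iff.mp hb
  have hc1 : c = 1 := by
    have := cardFactors_mul ha hc
    simpa [hc] using (show Ω c = 0 by omega)
  rw [hc1, mul_one]

theorem mem_levelSet_iff {n : ℕ} {x : ℕ+} : x ∈ levelSet n ↔ Ω x = n := by
  constructor
  · rintro ⟨l, rfl, hl, rfl⟩
    rw [PNat.coe_list_prod, cardFactors_apply,
      ← Nat.primeFactorsList_unique rfl (by simpa using hl) |>.length_eq, List.length_map]
  · rintro rfl
    have hpos : ∀ p ∈ (x : ℕ).primeFactorsList, 0 < p := fun p hp =>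
      (Nat.prime_of_mem_primeFactorsList hp).pos
    have hmap :
        ((x : ℕ).primeFactorsList.map Nat.toPNat').map (↑) = (x : ℕ).primeFactorsList := by
      rw [List.map_map]
      exact (List.map_congr_left fun p hp => PNat.toPNat'_coe (hpos p hp)).trans (List.map_id' _)
    refine ⟨(x : ℕ).primeFactorsList.map Nat.toPNat', by simp [cardFactors_apply], ?_, ?_⟩
    · intro p hp
      exact Nat.prime_of_mem_primeFactorsList (hmap ▸ List.mem_map_of_mem hp)
    · exact PNat.coe_injective <| by
        rw [PNat.coe_list_prod, hmap, Nat.prod_primeFactorsList x.ne_zero]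

theorem eq_of_dvd_of_mem_levelSet {n : ℕ} {a x : ℕ+} (ha : a ∈ levelSet n)
    (hx : x ∈ levelSet n) (h : a ∣ x) : a = x := by
  rw [mem_levelSet_iff] at ha hx
  exact PNat.coe_injective <|
    eq_of_dvd_of_cardFactors_le x.ne_zero (PNat.dvd_iff.mp h) (by rw [ha, hx])

theorem udvd.mem_of_mem_of_dvd_closed {F G : Ultrafilter ℕ+} (h : udvd G F) {A : Set ℕ+}
    (hA : ∀ a ∈ A, ∀ x, a ∣ x → x ∈ A) (hAG : A ∈ G) : A ∈ F :=
  Filter.mem_of_superset (h A hAG) fun _ ⟨a, ha, hax⟩ => hA a ha _ hax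

theorem levelSet_mem_of_udvd {F G : Ultrafilter ℕ+} {n : ℕ} (hGF : udvd G F) (hFG : udvd F G)
    (hF : levelSet n ∈ F) : levelSet n ∈ G := by
  let U (k : ℕ) : Set ℕ+ := {x | k ≤ Ω x}
  have hU (k : ℕ) : ∀ a ∈ U k, ∀ x, a ∣ x → x ∈ U k := fun a ha x hax =>
    ha.trans (cardFactors_le_of_dvd x.ne_zero (PNat.dvd_iff.mp hax))
  have hUnF : U n ∈ F :=
    Filter.mem_of_superset hF fun x hx => (mem_levelSet_iff.mp hx).ge
  have hUsuccF : U (n + 1) ∉ F := fun h => by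
    obtain ⟨x, hxU, hxL⟩ := Filter.nonempty_of_mem (Filter.inter_mem h hF)
    exact absurd hxU (by simp [U, mem_levelSet_iff.mp hxL])
  have hUnG : U n ∈ G := hFG.mem_of_mem_of_dvd_closed (hU n) hUnF
  have hUsuccG : (U (n + 1))ᶜ ∈ G :=
    Ultrafilter.compl_mem_iff_notMem.mpr fun h =>
      hUsuccF (hGF.mem_of_mem_of_dvd_closed (hU (n + 1)) h)
  refine Filter.mem_of_superset (Filter.inter_mem hUnG hUsuccG) fun x ⟨hn, hsucc⟩ => ?_
  simp only [U, Set.mem_compl_iff, Set.mem_ofPred_eq, not_le] at hn hsucc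
  exact mem_levelSet_iff.mpr (by omega)

theorem eq_of_udvd_of_antichain {F G : Ultrafilter ℕ+} {L : Set ℕ+} (hGF : udvd G F)
    (hL : ∀ a ∈ L, ∀ x ∈ L, a ∣ x → a = x) (hLF : L ∈ F) (hLG : L ∈ G) : G = F := by
  suffices (F : Filter ℕ+) ≤ G from (Ultrafilter.coe_le_coe.mp this).symm
  intro A hA
  refine Filter.mem_of_superset (Filter.inter_mem (hGF _ (Filter.inter_mem hA hLG)) hLF) ?_
  rintro x ⟨⟨a, ⟨haA, haL⟩, hax⟩, hxL⟩
  rwa [← hL a haL x hxL hax]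

theorem stmt10 (F : Ultrafilter ℕ+) (n : ℕ) (hF : levelSet n ∈ F) :
    ∀ G : Ultrafilter ℕ+, udvd G F → udvd F G → G = F := fun _ hGF hFG =>
  eq_of_udvd_of_antichain hGF (fun _ ha _ hx => eq_of_dvd_of_mem_levelSet ha hx) hF
    (levelSet_mem_of_udvd hGF hFG hF)
end

section
/- As binary relations on βℕ, the following strict inclusions hold: ∣_L ⊊ ∣_M, ∣_R ⊊ ∣_M, ∣_M ⊊ ≤_fe, and ≤_fe ⊊ ∣~. That is: F ∣_L G implies F ∣_M G, F ∣_R G implies F ∣_M G, F ∣_M G implies F ≤_fe G, and F ≤_fe G implies F ∣~ G, and none of these four implications can be reversed (for each there exist ultrafilters witnessing failure of the converse). -/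
/-- The extension of multiplication to `βℕ`:
`A ∈ F·G` iff `{m : {n : m*n ∈ A} ∈ G} ∈ F`. -/
def umul (F G : Ultrafilter ℕ+) : Ultrafilter ℕ+ :=
  F.bind fun m => Ultrafilter.map (fun n => m * n) G

/-- Left divisibility: `F ∣_L G` iff `G = H·F` for some `H`. -/
def divL (F G : Ultrafilter ℕ+) : Prop := ∃ H, G = umul H F

/-- Right divisibility: `F ∣_R G` iff `G = F·H` for some `H`. -/
def divR (F G : Ultrafilter ℕ+) : Prop := ∃ H, G = umul F H

/-- Mid divisibility: `F ∣_M G` iff `G = H·F·K` for some `H, K`. -/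
def divM (F G : Ultrafilter ℕ+) : Prop := ∃ H K, G = umul (umul H F) K

/-- `A ≤_fe B` for sets: every finite subset of `A` has a multiple inside `B`. -/
def feSet (A B : Set ℕ+) : Prop :=
  ∀ S : Finset ℕ+, ↑S ⊆ A → ∃ k : ℕ+, ∀ s ∈ S, k * s ∈ B

/-- `F ≤_fe G` for ultrafilters: for every `B ∈ G` there is `A ∈ F` with `A ≤_fe B`. -/
def fe (F G : Ultrafilter ℕ+) : Prop := ∀ B ∈ G, ∃ A ∈ F, feSet A B

/-!
The implications are formal: `∣_L` and `∣_R` are the cases `K = 1` and `H = 1` of `H·F·K`; if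
`B ∈ H·F·K`, then for some `h` the finite intersection property of `K` gives every finite part of
`{m : ∀ᶠ k in K, h·m·k ∈ B} ∈ F` a common multiple in `B`; and `≤_fe` tested on singletons is `∣~`.

The counterexamples start from a nonprincipal `F` on odd primes. With `K` nonprincipal on a
disjoint set of primes, a product of one prime of each kind determines its factors, so the sets
`{ab : a < b}` and `{ab : b < a}` detect in which order `F` and `K` were multiplied.

`G = lim_{b → U} F·2^{V_b}`, with `V_b` nonprincipal on the `b`-th of disjoint sets of powers of
two, is `≤_fe`-above `F`. If `G = H·F·K`, then `H` and `K` live on powers of two, so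
`G = 2^X·F·2^Y`; as `i + j` and `i' + j` are both powers of two only for small `j`, one of `X`,
`Y` is principal. A principal `Y` fixes the exponent before the prime grows, a principal `X`
chooses the block after the prime; in `G` it is the other way round.

The image of `F` under squaring contains every `A↑` with `A ∈ F`, but no multiplier sends two
distinct primes to squares of primes.
-/

open Filter Set Function

theorem mem_umul {F G : Ultrafilter ℕ+} {A : Set ℕ+} :
    A ∈ umul F G ↔ ∀ᶠ m in F, ∀ᶠ n in G, m * n ∈ A :=
  Iff.rfl

theorem mem_umul_umul {H F K : Ultrafilter ℕ+} {A : Set ℕ+} :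
    A ∈ umul (umul H F) K ↔ ∀ᶠ h in H, ∀ᶠ m in F, ∀ᶠ k in K, h * m * k ∈ A :=
  Iff.rfl

theorem Ultrafilter.mem_bind {α β : Type*} {U : Ultrafilter α} {f : α → Ultrafilter β}
    {A : Set β} : A ∈ U.bind f ↔ ∀ᶠ i in U, A ∈ f i :=
  Iff.rfl

theorem umul_pure_one (F : Ultrafilter ℕ+) : umul F (pure 1) = F :=
  Ultrafilter.coe_injective <| Filter.ext fun _ => by simp [mem_umul]

theorem pure_one_umul (F : Ultrafilter ℕ+) : umul (pure 1) F = F :=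
  Ultrafilter.coe_injective <| Filter.ext fun _ => by simp [mem_umul]

theorem divM_of_divL {F G : Ultrafilter ℕ+} : divL F G → divM F G :=
  fun ⟨H, hG⟩ => ⟨H, pure 1, by rw [umul_pure_one, hG]⟩

theorem divM_of_divR {F G : Ultrafilter ℕ+} : divR F G → divM F G :=
  fun ⟨K, hG⟩ => ⟨pure 1, K, by rw [pure_one_umul, hG]⟩

theorem feSet_setOf_eventually (c : ℕ+) (K : Ultrafilter ℕ+) (B : Set ℕ+) :
    feSet {m | ∀ᶠ k in K, c * m * k ∈ B} B := by
  intro S hS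
  obtain ⟨k, hk⟩ := ((S.eventually_all).2 fun s hs => hS hs).exists
  exact ⟨c * k, fun s hs => by simpa only [mul_right_comm] using hk s hs⟩

theorem fe_of_divM {F G : Ultrafilter ℕ+} : divM F G → fe F G := by
  rintro ⟨H, K, rfl⟩ B hB
  obtain ⟨h, hh⟩ := (mem_umul_umul.1 hB).exists
  exact ⟨_, hh, feSet_setOf_eventually h K B⟩

theorem fe_bind_umul {ι : Type*} (F : Ultrafilter ℕ+) (U : Ultrafilter ι)
    (K : ι → Ultrafilter ℕ+) : fe F (U.bind fun i => umul F (K i)) := by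
  intro B hB
  obtain ⟨i, hi⟩ := (Ultrafilter.mem_bind.1 hB).exists
  refine ⟨{m | ∀ᶠ k in K i, m * k ∈ B}, hi, ?_⟩
  simpa only [one_mul] using feSet_setOf_eventually 1 (K i) B

theorem udvd_of_fe {F G : Ultrafilter ℕ+} (h : fe F G) : udvd F G := by
  intro A hA
  by_contra hAG
  obtain ⟨A', hA', hfe⟩ := h _ (Ultrafilter.compl_mem_iff_notMem.2 hAG)
  obtain ⟨a, ha', ha⟩ := Ultrafilter.nonempty_of_mem (inter_mem hA' hA)
  obtain ⟨k, hk⟩ := hfe {a} (by simpa using ha')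
  exact hk a (Finset.mem_singleton_self a) ⟨a, ha, dvd_mul_left a k⟩

noncomputable def seqUltrafilter {α : Type*} (f : ℕ → α) : Ultrafilter α :=
  (hyperfilter ℕ).map f

theorem range_mem_seqUltrafilter {α : Type*} (f : ℕ → α) : range f ∈ seqUltrafilter f :=
  Ultrafilter.mem_map.2 (by rw [preimage_range]; exact univ_mem)

theorem seqUltrafilter_le_cofinite {α : Type*} {f : ℕ → α} (hf : Injective f) :
    (seqUltrafilter f : Filter α) ≤ cofinite :=
  hf.tendsto_cofinite.mono_left hyperfilter_le_cofinite

theorem tendsto_coe_atTop_of_le_cofinite {F : Ultrafilter ℕ+} (hF : (F : Filter ℕ+) ≤ cofinite) :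
    Tendsto (fun m : ℕ+ => (m : ℕ)) F atTop :=
  Nat.cofinite_eq_atTop ▸ PNat.coe_injective.tendsto_cofinite.mono_left hF

theorem exists_eq_map_of_range_mem {α β : Type*} {f : α → β} (hf : Injective f)
    {H : Ultrafilter β} (h : range f ∈ H) : ∃ X : Ultrafilter α, H = X.map f :=
  ⟨H.comap hf h, Ultrafilter.coe_injective (Filter.map_comap_of_mem h).symm⟩

theorem PNat.Prime.eq_or_eq_of_dvd_mul {m a b : ℕ+} (hm : m.Prime) (ha : a.Prime) (hb : b.Prime)
    (h : m ∣ a * b) : m = a ∨ m = b := by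
  rw [PNat.dvd_iff, PNat.mul_coe] at h
  rcases (Nat.Prime.dvd_mul hm).1 h with h | h
  · exact .inl (PNat.coe_injective ((Nat.prime_dvd_prime_iff_eq hm ha).1 h))
  · exact .inr (PNat.coe_injective ((Nat.prime_dvd_prime_iff_eq hm hb).1 h))

theorem PNat.Prime.eq_of_mul_eq_sq {k p r : ℕ+} (hp : p.Prime) (hr : r.Prime)
    (h : k * p = r ^ 2) : k = p := by
  obtain rfl : p = r := (hp.eq_or_eq_of_dvd_mul hr hr ⟨k, by rw [← sq, ← h, mul_comm]⟩).elim id id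
  exact mul_right_cancel (h.trans (sq p))

theorem PNat.exists_eq_two_pow_of_dvd {a : ℕ+} {n : ℕ} (h : a ∣ 2 ^ n) : ∃ i, (2 : ℕ+) ^ i = a := by
  rw [PNat.dvd_iff, PNat.pow_coe] at h
  obtain ⟨i, -, hi⟩ := (Nat.dvd_prime_pow Nat.prime_two).1 h
  exact ⟨i, PNat.coe_injective (by simpa using hi.symm)⟩

theorem PNat.two_pow_injective : Injective ((2 : ℕ+) ^ · : ℕ → ℕ+) :=
  fun _ _ h => Nat.pow_right_injective le_rfl (by simpa using congrArg PNat.val h)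

theorem Nat.le_max_of_add_eq_two_pow {x a a' u v : ℕ} (hne : a ≠ a') (hu : x + a = 2 ^ u)
    (hv : x + a' = 2 ^ v) : x ≤ max a a' := by
  have key : ∀ {a a' u v : ℕ}, a < a' → x + a = 2 ^ u → x + a' = 2 ^ v → x ≤ a' := by
    intro a a' u v hlt hu hv
    have huv : u < v := (Nat.pow_lt_pow_iff_right (a := 2) (by norm_num)).1 (by omega)
    have := Nat.pow_le_pow_right (n := 2) (by norm_num) huv
    rw [pow_succ] at this
    omega
  rcases hne.lt_or_gt with h | h
  · exact (key h hu hv).trans (le_max_right _ _)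
  · exact (key h hv hu).trans (le_max_left _ _)

def pairSet (P Q : Set ℕ+) (R : ℕ+ → ℕ+ → Prop) : Set ℕ+ :=
  {x | ∃ a ∈ P, ∃ b ∈ Q, R a b ∧ x = a * b}

section PairSet

variable {P Q : Set ℕ+} {R : ℕ+ → ℕ+ → Prop} {F K : Ultrafilter ℕ+}

theorem mem_and_of_mul_mem_pairSet (hP : ∀ p ∈ P, p.Prime) (hQ : ∀ q ∈ Q, q.Prime)
    (hPQ : Disjoint P Q) {h m : ℕ+} (hm : m ∈ P) (hmem : h * m ∈ pairSet P Q R) :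
    h ∈ Q ∧ R m h := by
  obtain ⟨a, ha, b, hb, hR, hab⟩ := hmem
  rcases (hP m hm).eq_or_eq_of_dvd_mul (hP a ha) (hQ b hb) (hab ▸ dvd_mul_left m h) with rfl | rfl
  · obtain rfl : h = b := mul_left_cancel ((mul_comm m h).trans hab)
    exact ⟨hb, hR⟩
  · exact (hPQ.ne_of_mem hm hb rfl).elim

theorem pairSet_mem_umul (hF : P ∈ F) (hK : Q ∈ K) (h : ∀ᶠ a in F, ∀ᶠ b in K, R a b) :
    pairSet P Q R ∈ umul F K :=
  (h.and hF).mono fun a ⟨hR, ha⟩ => (hR.and hK).mono fun b ⟨hab, hb⟩ => ⟨a, ha, b, hb, hab, rfl⟩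

theorem pairSet_mem_umul_swap (hF : P ∈ F) (hK : Q ∈ K) (h : ∀ᶠ b in K, ∀ᶠ a in F, R a b) :
    pairSet P Q R ∈ umul K F :=
  (h.and hK).mono fun b ⟨hR, hb⟩ => (hR.and hF).mono fun a ⟨hab, ha⟩ =>
    ⟨a, ha, b, hb, hab, mul_comm b a⟩

theorem not_divL_umul (hP : ∀ p ∈ P, p.Prime) (hQ : ∀ q ∈ Q, q.Prime) (hPQ : Disjoint P Q)
    (hFc : (F : Filter ℕ+) ≤ cofinite) (hF : P ∈ F) (hKc : (K : Filter ℕ+) ≤ cofinite)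
    (hK : Q ∈ K) : ¬ divL F (umul F K) := by
  rintro ⟨H, hG⟩
  have hS : pairSet P Q (fun a b => (a : ℕ) < b) ∈ umul H F := hG ▸ pairSet_mem_umul hF hK
    (.of_forall fun a => (tendsto_coe_atTop_of_le_cofinite hKc).eventually_gt_atTop a)
  obtain ⟨h, hh⟩ := (mem_umul.1 hS).exists
  obtain ⟨m, ⟨hmh, hhm⟩, hmP⟩ := ((hh.and
    ((tendsto_coe_atTop_of_le_cofinite hFc).eventually_gt_atTop h)).and hF).exists
  exact hhm.not_gt (mem_and_of_mul_mem_pairSet hP hQ hPQ hmP hmh).2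

theorem not_divR_umul (hP : ∀ p ∈ P, p.Prime) (hQ : ∀ q ∈ Q, q.Prime) (hPQ : Disjoint P Q)
    (hFc : (F : Filter ℕ+) ≤ cofinite) (hF : P ∈ F) (hKc : (K : Filter ℕ+) ≤ cofinite)
    (hK : Q ∈ K) : ¬ divR F (umul K F) := by
  rintro ⟨H, hG⟩
  obtain ⟨c, rfl⟩ : ∃ c, H = pure c := by
    refine H.le_cofinite_or_eq_pure.resolve_left fun hHc => ?_
    have hS : pairSet P Q (fun a b => (b : ℕ) < a) ∈ umul F H := hG ▸ pairSet_mem_umul_swap hF hK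
      (.of_forall fun b => (tendsto_coe_atTop_of_le_cofinite hFc).eventually_gt_atTop b)
    obtain ⟨m, hm, hmP⟩ := ((mem_umul.1 hS).and hF).exists
    obtain ⟨k, hmk, hkm⟩ :=
      (hm.and ((tendsto_coe_atTop_of_le_cofinite hHc).eventually_gt_atTop m)).exists
    exact hkm.not_gt (mem_and_of_mul_mem_pairSet hP hQ hPQ hmP (mul_comm m k ▸ hmk)).2
  have hS : pairSet P Q (fun _ b => b ≠ c) ∈ umul F (pure c) := hG ▸ pairSet_mem_umul_swap hF hK
    ((Eventually.filter_mono hKc (eventually_cofinite_ne c)).mono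
      fun _ hb => .of_forall fun _ => hb)
  obtain ⟨m, hm, hmP⟩ := ((mem_umul.1 hS).and hF).exists
  have hcm : c * m ∈ pairSet P Q (fun _ b => b ≠ c) := mul_comm m c ▸ hm
  exact (mem_and_of_mul_mem_pairSet hP hQ hPQ hmP hcm).2 rfl

end PairSet

theorem not_eventually_add_eq_two_pow {X Y : Ultrafilter ℕ} (hX : (X : Filter ℕ) ≤ cofinite)
    (hY : (Y : Filter ℕ) ≤ atTop) : ¬ ∀ᶠ i in X, ∀ᶠ j in Y, ∃ u, i + j = 2 ^ u := by
  intro h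
  obtain ⟨i, hi⟩ := h.exists
  obtain ⟨i', hi', hne⟩ := (h.and (Eventually.filter_mono hX (eventually_cofinite_ne i))).exists
  obtain ⟨j, ⟨⟨u, hu⟩, ⟨v, hv⟩⟩, hj⟩ :=
    ((hi.and hi').and (Eventually.filter_mono hY (eventually_gt_atTop (max i i')))).exists
  exact hj.not_ge (Nat.le_max_of_add_eq_two_pow hne.symm (by rwa [add_comm]) (by rwa [add_comm]))

def oddPrimes : Set ℕ+ := {p | p.Prime ∧ p ≠ 2}

theorem eq_of_dvd_mul_two_pow {m q : ℕ+} (hm : m ∈ oddPrimes) (hq : q.Prime) {n : ℕ}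
    (h : m ∣ q * 2 ^ n) : m = q := by
  rw [PNat.dvd_iff, PNat.mul_coe, PNat.pow_coe] at h
  rcases (Nat.Prime.dvd_mul hm.1).1 h with h | h
  · exact PNat.coe_injective ((Nat.prime_dvd_prime_iff_eq hm.1 hq).1 h)
  · exact absurd (PNat.coe_injective
      ((Nat.prime_dvd_prime_iff_eq hm.1 Nat.prime_two).1 (Nat.Prime.dvd_of_dvd_pow hm.1 h))) hm.2

def oddPrimeTwoPowSet (R : ℕ+ → ℕ → Prop) : Set ℕ+ :=
  {x | ∃ q ∈ oddPrimes, ∃ n, R q n ∧ x = q * 2 ^ n}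

section OddPrimeTwoPowSet

variable {R : ℕ+ → ℕ → Prop}

theorem mul_two_pow_mem_oddPrimeTwoPowSet {q : ℕ+} {n : ℕ} (hq : q ∈ oddPrimes) :
    q * 2 ^ n ∈ oddPrimeTwoPowSet R ↔ R q n := by
  refine ⟨fun ⟨q', hq', n', hR, h⟩ => ?_, fun hR => ⟨q, hq, n, hR, rfl⟩⟩
  obtain rfl : q = q' := eq_of_dvd_mul_two_pow hq hq'.1 (h ▸ dvd_mul_right q _)
  rwa [PNat.two_pow_injective (mul_left_cancel h)]

theorem two_pow_mem_range_of_mul_mul_mem {h m k : ℕ+} (hm : m ∈ oddPrimes)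
    (hx : h * m * k ∈ oddPrimeTwoPowSet R) :
    h ∈ range ((2 : ℕ+) ^ · : ℕ → ℕ+) ∧ k ∈ range ((2 : ℕ+) ^ · : ℕ → ℕ+) := by
  obtain ⟨q, hq, n, -, hx⟩ := hx
  obtain rfl : m = q := eq_of_dvd_mul_two_pow hm hq.1 (by rw [← hx]; exact ⟨h * k, by ac_rfl⟩)
  have hhk : h * k = 2 ^ n := mul_left_cancel (by rw [← hx]; ac_rfl)
  exact ⟨PNat.exists_eq_two_pow_of_dvd (hhk ▸ dvd_mul_right h k),
    PNat.exists_eq_two_pow_of_dvd (hhk ▸ dvd_mul_left k h)⟩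

variable {F : Ultrafilter ℕ+}

theorem exists_eq_map_two_pow_of_mem_umul_umul {H K : Ultrafilter ℕ+} (hF : oddPrimes ∈ F)
    (h : oddPrimeTwoPowSet R ∈ umul (umul H F) K) :
    (∃ X : Ultrafilter ℕ, H = X.map ((2 : ℕ+) ^ ·)) ∧
      ∃ Y : Ultrafilter ℕ, K = Y.map ((2 : ℕ+) ^ ·) := by
  have hdec : ∀ᶠ h in H, ∀ᶠ m : ℕ+ in F, ∀ᶠ k in K,
      h ∈ range ((2 : ℕ+) ^ · : ℕ → ℕ+) ∧ k ∈ range ((2 : ℕ+) ^ · : ℕ → ℕ+) :=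
    (mem_umul_umul.1 h).mono fun _ hh => (hh.and hF).mono fun _ ⟨hm, hmQ⟩ => hm.mono fun _ hk =>
      two_pow_mem_range_of_mul_mul_mem hmQ hk
  obtain ⟨_, hh₀⟩ := hdec.exists
  obtain ⟨_, hm₀⟩ := hh₀.exists
  refine ⟨exists_eq_map_of_range_mem PNat.two_pow_injective ?_,
    exists_eq_map_of_range_mem PNat.two_pow_injective (hm₀.mono fun _ hk => hk.2)⟩
  filter_upwards [hdec] with h hh
  obtain ⟨_, hm⟩ := hh.exists
  exact hm.exists.elim fun _ hk => hk.1

theorem eventually_of_mem_umul_umul_map_two_pow {X Y : Ultrafilter ℕ} (hF : oddPrimes ∈ F)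
    (h : oddPrimeTwoPowSet R ∈ umul (umul (X.map ((2 : ℕ+) ^ ·)) F) (Y.map ((2 : ℕ+) ^ ·))) :
    ∀ᶠ i in X, ∀ᶠ m in F, ∀ᶠ j in Y, R m (i + j) := by
  have h' : ∀ᶠ i in X, ∀ᶠ m in F, ∀ᶠ j in Y, 2 ^ i * m * 2 ^ j ∈ oddPrimeTwoPowSet R := h
  exact h'.mono fun i hi => (hi.and hF).mono fun m ⟨hm, hmQ⟩ => hm.mono fun j hj =>
    (mul_two_pow_mem_oddPrimeTwoPowSet hmQ).1 (by rwa [pow_add, ← mul_assoc, mul_comm m])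

noncomputable def blockUltrafilter (b : ℕ) : Ultrafilter ℕ :=
  seqUltrafilter fun t => 2 ^ Nat.pair b t

def blockIndex (n : ℕ) : ℕ := (Nat.log 2 n).unpair.1

theorem eventually_blockUltrafilter (b : ℕ) :
    ∀ᶠ n in blockUltrafilter b, blockIndex n = b ∧ ∃ u, n = 2 ^ u :=
  mem_of_superset (range_mem_seqUltrafilter _) <| by
    rintro _ ⟨t, rfl⟩
    exact ⟨by simp [blockIndex, Nat.log_pow], _, rfl⟩

theorem blockUltrafilter_le_atTop (b : ℕ) : (blockUltrafilter b : Filter ℕ) ≤ atTop :=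
  Nat.cofinite_eq_atTop ▸ seqUltrafilter_le_cofinite
    fun _ _ h => (Nat.pair_eq_pair.1 (Nat.pow_right_injective le_rfl h)).2

noncomputable def blockLimit (F : Ultrafilter ℕ+) : Ultrafilter ℕ+ :=
  (hyperfilter ℕ).bind fun b => umul F ((blockUltrafilter b).map ((2 : ℕ+) ^ ·))

theorem oddPrimeTwoPowSet_mem_blockLimit (hF : oddPrimes ∈ F)
    (h : ∀ᶠ b in hyperfilter ℕ, ∀ᶠ m in F, ∀ᶠ n in blockUltrafilter b, R m n) :
    oddPrimeTwoPowSet R ∈ blockLimit F :=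
  h.mono fun _ hb => (hb.and hF).mono fun m ⟨hm, hmQ⟩ => hm.mono fun n hn => ⟨m, hmQ, n, hn, rfl⟩

end OddPrimeTwoPowSet

/-- In exponent coordinates: every test set `oddPrimeTwoPowSet R` of `blockLimit F` lies in
`2^X·F·2^Y`. -/
def TransfersBlockLimit (F : Ultrafilter ℕ+) (X Y : Ultrafilter ℕ) : Prop :=
  ∀ R : ℕ+ → ℕ → Prop, (∀ᶠ b in hyperfilter ℕ, ∀ᶠ m in F, ∀ᶠ n in blockUltrafilter b, R m n) →
    ∀ᶠ i in X, ∀ᶠ m in F, ∀ᶠ j in Y, R m (i + j)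

namespace TransfersBlockLimit

variable {F : Ultrafilter ℕ+} {X Y : Ultrafilter ℕ}

theorem exists_eq_pure_left (h : TransfersBlockLimit F X Y) (hY : (Y : Filter ℕ) ≤ cofinite) :
    ∃ i₀, X = pure i₀ := by
  refine X.le_cofinite_or_eq_pure.resolve_left fun hX => not_eventually_add_eq_two_pow hX
    (hY.trans_eq Nat.cofinite_eq_atTop) ((h (fun _ n => ∃ u, n = 2 ^ u) ?_).mono
      fun _ hi => hi.exists.elim fun _ => id)
  exact .of_forall fun b => .of_forall fun _ =>
    (eventually_blockUltrafilter b).mono fun _ hn => hn.2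

theorem not_pure_left (hFc : (F : Filter ℕ+) ≤ cofinite) (i₀ : ℕ) :
    ¬ TransfersBlockLimit F (pure i₀) Y := by
  intro h
  have hFtop := tendsto_coe_atTop_of_le_cofinite hFc
  have hbdd : ∀ᶠ m : ℕ+ in F, ∀ᶠ j in Y, blockIndex (i₀ + j) < m :=
    h (fun m n => blockIndex n < m) <| .of_forall fun b =>
      (hFtop.eventually_gt_atTop b).mono fun _ hm =>
        (eventually_blockUltrafilter b).mono fun _ hn => hn.1 ▸ hm
  obtain ⟨m, hm⟩ := hbdd.exists
  have hunbdd : ∀ᶠ _ : ℕ+ in F, ∀ᶠ j in Y, (m : ℕ) ≤ blockIndex (i₀ + j) :=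
    h (fun _ n => m ≤ blockIndex n) <|
      (Eventually.filter_mono Nat.hyperfilter_le_atTop (eventually_ge_atTop (m : ℕ))).mono
        fun b hb => .of_forall fun _ => (eventually_blockUltrafilter b).mono fun _ hn => hn.1 ▸ hb
  obtain ⟨_, hm'⟩ := hunbdd.exists
  obtain ⟨j, hlt, hge⟩ := (hm.and hm').exists
  exact hlt.not_ge hge

theorem not_pure_right (hFc : (F : Filter ℕ+) ≤ cofinite) (j₀ : ℕ) :
    ¬ TransfersBlockLimit F X (pure j₀) := by
  intro h
  obtain ⟨i, hi⟩ := (h (fun m n => (m : ℕ) ≤ n) <| .of_forall fun b => .of_forall fun m =>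
    Eventually.filter_mono (blockUltrafilter_le_atTop b) (eventually_ge_atTop (m : ℕ))).exists
  obtain ⟨m, hle, hlt⟩ :=
    (hi.and ((tendsto_coe_atTop_of_le_cofinite hFc).eventually_gt_atTop (i + j₀))).exists
  exact hlt.not_ge hle

end TransfersBlockLimit

theorem not_divM_blockLimit {F : Ultrafilter ℕ+} (hFc : (F : Filter ℕ+) ≤ cofinite)
    (hF : oddPrimes ∈ F) : ¬ divM F (blockLimit F) := by
  rintro ⟨H, K, hG⟩
  have hmem : ∀ R : ℕ+ → ℕ → Prop,
      (∀ᶠ b in hyperfilter ℕ, ∀ᶠ m in F, ∀ᶠ n in blockUltrafilter b, R m n) →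
        oddPrimeTwoPowSet R ∈ umul (umul H F) K :=
    fun R h => hG ▸ oddPrimeTwoPowSet_mem_blockLimit hF h
  obtain ⟨⟨X, rfl⟩, ⟨Y, rfl⟩⟩ := exists_eq_map_two_pow_of_mem_umul_umul hF
    (hmem (fun _ _ => True) (.of_forall fun _ => .of_forall fun _ => .of_forall fun _ => trivial))
  have h : TransfersBlockLimit F X Y :=
    fun R hR => eventually_of_mem_umul_umul_map_two_pow hF (hmem R hR)
  rcases Y.le_cofinite_or_eq_pure with hY | ⟨j₀, rfl⟩
  · obtain ⟨i₀, rfl⟩ := h.exists_eq_pure_left hY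
    exact TransfersBlockLimit.not_pure_left hFc i₀ h
  · exact TransfersBlockLimit.not_pure_right hFc j₀ h

theorem udvd_map_sq (F : Ultrafilter ℕ+) : udvd F (F.map (· ^ 2)) :=
  fun _ hA => Ultrafilter.mem_map.2 <|
    mem_of_superset hA fun a ha => ⟨a, ha, dvd_pow_self a two_ne_zero⟩

theorem not_fe_map_sq {F : Ultrafilter ℕ+} (hFc : (F : Filter ℕ+) ≤ cofinite)
    (hF : {p : ℕ+ | p.Prime} ∈ F) : ¬ fe F (F.map (· ^ 2)) := by
  intro hfe
  obtain ⟨A, hA, hAB⟩ := hfe ((· ^ 2) '' {p | p.Prime})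
    (Ultrafilter.mem_map.2 <| mem_of_superset hF fun p hp => mem_image_of_mem (· ^ 2) hp)
  have hAP : ∀ᶠ p in F, p ∈ A ∧ p.Prime := eventually_mem_set.2 (inter_mem hA hF)
  obtain ⟨p, hpA, hp⟩ := hAP.exists
  obtain ⟨q, ⟨hqA, hq⟩, hqp⟩ :=
    (hAP.and (Eventually.filter_mono hFc (eventually_cofinite_ne p))).exists
  obtain ⟨k, hk⟩ := hAB {p, q} (by simp [insert_subset_iff, hpA, hqA])
  obtain ⟨r, hr, hkp⟩ := hk p (by simp)
  obtain ⟨r', hr', hkq⟩ := hk q (by simp)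
  exact hqp ((hq.eq_of_mul_eq_sq hr' hkq.symm).symm.trans (hp.eq_of_mul_eq_sq hr hkp.symm))

noncomputable def nthPrime (k : ℕ) : ℕ+ := ⟨Nat.nth Nat.Prime k, (Nat.prime_nth_prime k).pos⟩

theorem nthPrime_prime (k : ℕ) : (nthPrime k).Prime := Nat.prime_nth_prime k

theorem nthPrime_injective : Injective nthPrime :=
  fun _ _ h => Nat.nth_injective Nat.infinite_setOfPred_prime (congrArg PNat.val h)

theorem nthPrime_ne_two {k : ℕ} (hk : k ≠ 0) : nthPrime k ≠ 2 :=
  fun h => hk (nthPrime_injective (h.trans (PNat.coe_injective Nat.nth_prime_zero_eq_two.symm)))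

theorem stmt19 :
    ((∀ F G : Ultrafilter ℕ+, divL F G → divM F G) ∧
      ∃ F G : Ultrafilter ℕ+, divM F G ∧ ¬ divL F G) ∧
    ((∀ F G : Ultrafilter ℕ+, divR F G → divM F G) ∧
      ∃ F G : Ultrafilter ℕ+, divM F G ∧ ¬ divR F G) ∧
    ((∀ F G : Ultrafilter ℕ+, divM F G → fe F G) ∧
      ∃ F G : Ultrafilter ℕ+, fe F G ∧ ¬ divM F G) ∧
    ((∀ F G : Ultrafilter ℕ+, fe F G → udvd F G) ∧
      ∃ F G : Ultrafilter ℕ+, udvd F G ∧ ¬ fe F G) := by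
  set P := range fun k => nthPrime (2 * k + 1)
  set Q := range fun k => nthPrime (2 * k)
  set F := seqUltrafilter fun k => nthPrime (2 * k + 1)
  set K := seqUltrafilter fun k => nthPrime (2 * k)
  have hP : ∀ p ∈ P, p.Prime := by rintro _ ⟨k, rfl⟩; exact nthPrime_prime _
  have hQ : ∀ q ∈ Q, q.Prime := by rintro _ ⟨k, rfl⟩; exact nthPrime_prime _
  have hPQ : Disjoint P Q := disjoint_left.2 <| by
    rintro _ ⟨k, rfl⟩ ⟨l, hl⟩
    have := nthPrime_injective hl
    omega
  have hFc : (F : Filter ℕ+) ≤ cofinite :=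
    seqUltrafilter_le_cofinite (nthPrime_injective.comp fun _ _ h => by simpa using h)
  have hKc : (K : Filter ℕ+) ≤ cofinite :=
    seqUltrafilter_le_cofinite (nthPrime_injective.comp fun _ _ h => by simpa using h)
  have hFP : P ∈ F := range_mem_seqUltrafilter _
  have hKQ : Q ∈ K := range_mem_seqUltrafilter _
  have hFodd : oddPrimes ∈ F := mem_of_superset hFP <| by
    rintro _ ⟨k, rfl⟩; exact ⟨nthPrime_prime _, nthPrime_ne_two (by omega)⟩
  exact ⟨⟨fun _ _ => divM_of_divL, F, umul F K, divM_of_divR ⟨K, rfl⟩,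
      not_divL_umul hP hQ hPQ hFc hFP hKc hKQ⟩,
    ⟨fun _ _ => divM_of_divR, F, umul K F, divM_of_divL ⟨K, rfl⟩,
      not_divR_umul hP hQ hPQ hFc hFP hKc hKQ⟩,
    ⟨fun _ _ => fe_of_divM, F, blockLimit F, fe_bind_umul _ _ _, not_divM_blockLimit hFc hFodd⟩,
    ⟨fun _ _ => udvd_of_fe, F, F.map (· ^ 2), udvd_map_sq F,
      not_fe_map_sq hFc (mem_of_superset hFP fun p hp => hP p hp)⟩⟩
end
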